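/- For d ≥ 2 and n a nonnegative integer, the function u(t,x) = [(1+(t+r)²)(1+(t−r)²)]^{(1−d)/4} e^{−iT(n+(d−1)/2)} Y_n(cos R, ω sin R), with r = |x|, ω = x/r, and (T,R) the Penrose coordinates of (t,r), satisfies the wave equation ∂_t²u = Δu on ℝ^{1+d}, provided U(T,X) = e^{−iT(n+(d−1)/2)}Y_n(X) satisfies the conformal wave equation ∂_T²U = Δ_{S^d}U − ((d−1)²/4)U and the Penrose map is conformal with conformal factor 4[(1+(t+r)²)(1+(t−r)²)]^{−1}. -/

import Mathlib

open Real

/-- The Euclidean Laplacian of a function on `Fin m → ℝ` (sum of second directional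
derivatives along the coordinate directions), at a point. -/
noncomputable def lapPi {m : ℕ} {E : Type*} [NormedAddCommGroup E] [NormedSpace ℝ E]
    (u : (Fin m → ℝ) → E) (x : Fin m → ℝ) : E :=
  ∑ i : Fin m, iteratedDeriv 2 (fun s : ℝ => u (x + s • (Pi.single i 1 : Fin m → ℝ))) 0

/-- The solution family `u(t,x) = [(1+(t+r)²)(1+(t−r)²)]^{(1−d)/4} e^{−iT(n+(d−1)/2)}
Y_n(cos R, ω sin R)` built from a spherical harmonic `Y_n` via the Penrose coordinates,
where `r = |x|`, `ω = x/r`. -/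
noncomputable def uFun (d n : ℕ) (Y : (Fin (d + 1) → ℝ) → ℝ) (t : ℝ) (x : Fin d → ℝ) : ℂ :=
  let r := Real.sqrt (∑ i, x i ^ 2)
  let T := Real.arctan (t + r) + Real.arctan (t - r)
  let R := Real.arctan (t + r) - Real.arctan (t - r)
  ((((1 + (t + r) ^ 2) * (1 + (t - r) ^ 2)) ^ ((1 - (d:ℝ)) / 4) : ℝ) : ℂ)
    * Complex.exp (-Complex.I * ((T * ((n:ℝ) + ((d:ℝ) - 1) / 2) : ℝ) : ℂ))
    * ((Y (Fin.cons (Real.cos R) fun j => Real.sin R * (x j / r)) : ℝ) : ℂ)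


section aux

variable {m : ℕ} {Y : (Fin m → ℝ) → ℝ}

lemma iteratedDeriv_two {F : Type*} [NormedAddCommGroup F] [NormedSpace ℝ F] (f : ℝ → F) :
    iteratedDeriv 2 f = deriv (deriv f) := by
  rw [show (2 : ℕ) = 1 + 1 from rfl, iteratedDeriv_succ, iteratedDeriv_one]

lemma curve_hasDerivAt (A B C : Fin m → ℝ) (s : ℝ) :
    HasDerivAt (fun s : ℝ => A + s • B + s ^ 2 • C) (B + (2 * s) • C) s := by
  have h1 : HasDerivAt (fun s : ℝ => s • B) ((1 : ℝ) • B) s := (hasDerivAt_id s).smul_const B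
  have h2 : HasDerivAt (fun s : ℝ => s ^ 2 • C) ((((2 : ℕ) : ℝ) * s ^ 1) • C) s :=
    (hasDerivAt_pow 2 s).smul_const C
  have h := ((hasDerivAt_const s A).add h1).add h2
  refine h.congr_deriv ?_
  simp [pow_one]

lemma Z_hasDerivAt (hY : ContDiff ℝ (⊤ : ℕ∞) Y) (A B C : Fin m → ℝ) (s : ℝ) :
    HasDerivAt (fun s : ℝ => Y (A + s • B + s ^ 2 • C))
      (fderiv ℝ Y (A + s • B + s ^ 2 • C) (B + (2 * s) • C)) s :=
  ((hY.differentiable (by simp) _).hasFDerivAt).comp_hasDerivAt s (curve_hasDerivAt A B C s)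

lemma Z'_hasDerivAt (hY : ContDiff ℝ (⊤ : ℕ∞) Y) (A B C : Fin m → ℝ) (s0 : ℝ) :
    HasDerivAt (fun s : ℝ => fderiv ℝ Y (A + s • B + s ^ 2 • C) (B + (2 * s) • C))
      (fderiv ℝ (fderiv ℝ Y) (A + s0 • B + s0 ^ 2 • C) (B + (2 * s0) • C) (B + (2 * s0) • C)
        + fderiv ℝ Y (A + s0 • B + s0 ^ 2 • C) ((2 : ℝ) • C)) s0 := by
  have hG : HasDerivAt (fun s : ℝ => fderiv ℝ Y (A + s • B + s ^ 2 • C))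
      (fderiv ℝ (fderiv ℝ Y) (A + s0 • B + s0 ^ 2 • C) (B + (2 * s0) • C)) s0 :=
    (((hY.fderiv_right (m := 1) (by exact WithTop.coe_le_coe.mpr le_top)).differentiable (by simp) _).hasFDerivAt).comp_hasDerivAt s0
      (curve_hasDerivAt A B C s0)
  have hu : HasDerivAt (fun s : ℝ => B + (2 * s) • C) ((2 : ℝ) • C) s0 := by
    have h2 : HasDerivAt (fun s : ℝ => (2 * s) • C) (((2 : ℝ) * 1) • C) s0 :=
      ((hasDerivAt_id s0).const_mul (2 : ℝ)).smul_const C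
    have h := (hasDerivAt_const s0 B).add h2
    refine h.congr_deriv ?_
    module
  exact hG.clm_apply hu

lemma line_iteratedDeriv2 (hY : ContDiff ℝ (⊤ : ℕ∞) Y) (A B C : Fin m → ℝ) (s0 : ℝ) :
    iteratedDeriv 2 (fun s : ℝ => Y (A + s • B + s ^ 2 • C)) s0
      = fderiv ℝ (fderiv ℝ Y) (A + s0 • B + s0 ^ 2 • C) (B + (2 * s0) • C) (B + (2 * s0) • C)
        + fderiv ℝ Y (A + s0 • B + s0 ^ 2 • C) ((2 : ℝ) • C) := by
  rw [iteratedDeriv_two]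
  rw [funext fun s => (Z_hasDerivAt hY A B C s).deriv]
  exact (Z'_hasDerivAt hY A B C s0).deriv

lemma line_cpow_iteratedDeriv2 (hY : ContDiff ℝ (⊤ : ℕ∞) Y) (a b cc : ℂ) (μ : ℂ)
    (hq : ∀ s : ℝ, (a + b * (s : ℂ) + cc * (s : ℂ) ^ 2) ∈ Complex.slitPlane)
    (A B C : Fin m → ℝ) (s0 : ℝ) :
    iteratedDeriv 2
        (fun s : ℝ => (a + b * (s : ℂ) + cc * (s : ℂ) ^ 2) ^ μ * (Y (A + s • B + s ^ 2 • C) : ℂ))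
        s0
      = μ * (μ - 1) * (a + b * s0 + cc * (s0 : ℂ) ^ 2) ^ (μ - 2) * (b + 2 * cc * s0) ^ 2
            * (Y (A + s0 • B + s0 ^ 2 • C) : ℂ)
        + μ * (a + b * s0 + cc * (s0 : ℂ) ^ 2) ^ (μ - 1) *
            (2 * cc * (Y (A + s0 • B + s0 ^ 2 • C) : ℂ)
              + 2 * (b + 2 * cc * s0)
                * ((fderiv ℝ Y (A + s0 • B + s0 ^ 2 • C) (B + (2 * s0) • C) : ℝ) : ℂ))
        + (a + b * s0 + cc * (s0 : ℂ) ^ 2) ^ μ *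
            (((fderiv ℝ (fderiv ℝ Y) (A + s0 • B + s0 ^ 2 • C) (B + (2 * s0) • C)
                (B + (2 * s0) • C) : ℝ) : ℂ)
              + ((fderiv ℝ Y (A + s0 • B + s0 ^ 2 • C) ((2 : ℝ) • C) : ℝ) : ℂ)) := by
  have hqC : ∀ w : ℂ, HasDerivAt (fun z : ℂ => a + b * z + cc * z ^ 2)
      (b + 2 * cc * w) w := by
    intro w
    have h1 : HasDerivAt (fun z : ℂ => b * z) (b * 1) w := (hasDerivAt_id w).const_mul b
    have h2 := (hasDerivAt_pow 2 w).const_mul cc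
    have h := ((hasDerivAt_const w a).add h1).add h2
    refine h.congr_deriv ?_
    push_cast
    ring
  have hqd : ∀ s : ℝ, HasDerivAt (fun s : ℝ => a + b * (s : ℂ) + cc * (s : ℂ) ^ 2)
      (b + 2 * cc * (s : ℂ)) s := fun s => (hqC (s : ℂ)).comp_ofReal
  have hpow : ∀ (ν : ℂ) (s : ℝ), HasDerivAt (fun s : ℝ => (a + b * (s : ℂ) + cc * (s : ℂ) ^ 2) ^ ν)
      (ν * (a + b * (s : ℂ) + cc * (s : ℂ) ^ 2) ^ (ν - 1) * (b + 2 * cc * (s : ℂ))) s :=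
    fun ν s => (((hqC (s : ℂ)).cpow_const (hq s)).comp_ofReal)
  have hZc : ∀ s : ℝ, HasDerivAt (fun s : ℝ => (Y (A + s • B + s ^ 2 • C) : ℂ))
      ((fderiv ℝ Y (A + s • B + s ^ 2 • C) (B + (2 * s) • C) : ℝ) : ℂ) s :=
    fun s => (Z_hasDerivAt hY A B C s).ofReal_comp
  have h1 : ∀ s : ℝ, HasDerivAt
      (fun s : ℝ => (a + b * (s : ℂ) + cc * (s : ℂ) ^ 2) ^ μ * (Y (A + s • B + s ^ 2 • C) : ℂ))
      (μ * (a + b * (s : ℂ) + cc * (s : ℂ) ^ 2) ^ (μ - 1) * (b + 2 * cc * (s : ℂ))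
          * (Y (A + s • B + s ^ 2 • C) : ℂ)
        + (a + b * (s : ℂ) + cc * (s : ℂ) ^ 2) ^ μ
          * ((fderiv ℝ Y (A + s • B + s ^ 2 • C) (B + (2 * s) • C) : ℝ) : ℂ)) s :=
    fun s => (hpow μ s).mul (hZc s)
  rw [iteratedDeriv_two]
  rw [funext fun s => (h1 s).deriv]
  have hq' : HasDerivAt (fun s : ℝ => b + 2 * cc * (s : ℂ)) (2 * cc) s0 := by
    have h : HasDerivAt (fun z : ℂ => b + 2 * cc * z) (2 * cc) (s0 : ℂ) := by
      have := (hasDerivAt_const (s0:ℂ) b).add ((hasDerivAt_id (s0:ℂ)).const_mul (2 * cc))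
      refine this.congr_deriv ?_
      ring
    exact h.comp_ofReal
  have hA := (((hpow (μ - 1) s0).const_mul μ).mul hq').mul (hZc s0)
  have hB := (hpow μ s0).mul ((Z'_hasDerivAt hY A B C s0).ofReal_comp)
  have hAB : HasDerivAt (fun s : ℝ => μ * (a + b * (s : ℂ) + cc * (s : ℂ) ^ 2) ^ (μ - 1)
      * (b + 2 * cc * (s : ℂ)) * (Y (A + s • B + s ^ 2 • C) : ℂ)
      + (a + b * (s : ℂ) + cc * (s : ℂ) ^ 2) ^ μ
        * ((fderiv ℝ Y (A + s • B + s ^ 2 • C) (B + (2 * s) • C) : ℝ) : ℂ)) _ s0 := hA.add hB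
  rw [hAB.deriv]
  rw [show μ - 1 - 1 = μ - 2 by ring]
  simp only [Pi.mul_apply]
  push_cast
  ring

end aux


section aux2

variable {m n : ℕ} {Y : (Fin m → ℝ) → ℝ}

lemma cons_decomp {k : ℕ} (a : ℝ) (g : Fin k → ℝ) :
    (Fin.cons a g : Fin (k + 1) → ℝ)
      = a • (Pi.single 0 1 : Fin (k + 1) → ℝ)
        + ∑ i : Fin k, g i • (Pi.single i.succ 1 : Fin (k + 1) → ℝ) := by
  funext j
  induction j using Fin.cases with
  | zero =>
      simp [Finset.sum_apply, Pi.single_apply, (Fin.succ_ne_zero _).symm]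
  | succ i =>
      simp [Finset.sum_apply, Pi.single_apply, Fin.succ_ne_zero, Fin.succ_inj]

lemma euler1 (hY : ContDiff ℝ (⊤ : ℕ∞) Y)
    (hYhom : ∀ (c : ℝ), 0 < c → ∀ X : Fin m → ℝ, Y (c • X) = c ^ n * Y X)
    (A : Fin m → ℝ) : fderiv ℝ Y A A = (n : ℝ) * Y A := by
  have hcurve : HasDerivAt (fun c : ℝ => c • A) ((1 : ℝ) • A) 1 := (hasDerivAt_id 1).smul_const A
  have h1 : HasDerivAt (fun c : ℝ => Y (c • A)) (fderiv ℝ Y ((1 : ℝ) • A) ((1 : ℝ) • A)) 1 :=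
    (hY.differentiable (by simp) _).hasFDerivAt.comp_hasDerivAt 1 hcurve
  have h2 : HasDerivAt (fun c : ℝ => c ^ n * Y A) (((n : ℝ) * 1 ^ (n - 1)) * Y A) 1 :=
    (hasDerivAt_pow n 1).mul_const (Y A)
  have heq : (fun c : ℝ => Y (c • A)) =ᶠ[nhds 1] fun c => c ^ n * Y A :=
    (eventually_gt_nhds one_pos).mono fun c hc => hYhom c hc A
  have := h1.unique (h2.congr_of_eventuallyEq heq)
  simpa using this

lemma fderiv_hom (hY : ContDiff ℝ (⊤ : ℕ∞) Y)
    (hYhom : ∀ (c : ℝ), 0 < c → ∀ X : Fin m → ℝ, Y (c • X) = c ^ n * Y X)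
    (c : ℝ) (hc : 0 < c) (X v : Fin m → ℝ) :
    c * fderiv ℝ Y (c • X) v = c ^ n * fderiv ℝ Y X v := by
  have hL : HasFDerivAt (fun X : Fin m → ℝ => Y (c • X))
      ((fderiv ℝ Y (c • X)).comp (c • ContinuousLinearMap.id ℝ (Fin m → ℝ))) X :=
    (hY.differentiable (by simp) _).hasFDerivAt.comp X ((hasFDerivAt_id X).const_smul c)
  have hR : HasFDerivAt (fun X : Fin m → ℝ => c ^ n * Y X) (c ^ n • fderiv ℝ Y X) X :=
    ((hY.differentiable (by simp) X).hasFDerivAt).const_mul (c ^ n)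
  rw [funext fun X => hYhom c hc X] at hL
  have := ContinuousLinearMap.ext_iff.mp (hL.unique hR) v
  simpa [mul_comm] using this

lemma euler2 (hY : ContDiff ℝ (⊤ : ℕ∞) Y)
    (hYhom : ∀ (c : ℝ), 0 < c → ∀ X : Fin m → ℝ, Y (c • X) = c ^ n * Y X)
    (A v : Fin m → ℝ) :
    fderiv ℝ (fderiv ℝ Y) A A v = ((n : ℝ) - 1) * fderiv ℝ Y A v := by
  have hψ : HasDerivAt (fun c : ℝ => fderiv ℝ Y (c • A) v)
      (fderiv ℝ (fderiv ℝ Y) ((1 : ℝ) • A) ((1 : ℝ) • A) v + fderiv ℝ Y ((1 : ℝ) • A) 0) 1 := by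
    have hG : HasDerivAt (fun c : ℝ => fderiv ℝ Y (c • A))
        (fderiv ℝ (fderiv ℝ Y) ((1 : ℝ) • A) ((1 : ℝ) • A)) 1 :=
      ((hY.fderiv_right (m := 1) (by exact WithTop.coe_le_coe.mpr le_top)).differentiable (by simp) _).hasFDerivAt.comp_hasDerivAt 1
        ((hasDerivAt_id 1).smul_const A)
    exact hG.clm_apply (hasDerivAt_const 1 v)
  have hφ := (hasDerivAt_id 1).mul hψ
  have h2 : HasDerivAt (fun c : ℝ => c ^ n * fderiv ℝ Y A v)
      (((n : ℝ) * 1 ^ (n - 1)) * fderiv ℝ Y A v) 1 :=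
    (hasDerivAt_pow n 1).mul_const _
  have heq : (fun c : ℝ => c * fderiv ℝ Y (c • A) v)
      =ᶠ[nhds 1] fun c => c ^ n * fderiv ℝ Y A v :=
    (eventually_gt_nhds one_pos).mono fun c hc => fderiv_hom hY hYhom c hc A v
  have h := hφ.unique (h2.congr_of_eventuallyEq heq)
  simp only [one_smul, id_eq, one_mul, map_zero, add_zero, one_pow] at h
  linarith [h]

lemma sym2 (hY : ContDiff ℝ (⊤ : ℕ∞) Y) (A u w : Fin m → ℝ) :
    fderiv ℝ (fderiv ℝ Y) A u w = fderiv ℝ (fderiv ℝ Y) A w u :=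
  second_derivative_symmetric (f := Y) (fun y => (hY.differentiable (by simp) y).hasFDerivAt)
    (((hY.fderiv_right (m := 1) (by exact WithTop.coe_le_coe.mpr le_top)).differentiable (by simp) A).hasFDerivAt) u w

lemma harm_sum (hY : ContDiff ℝ (⊤ : ℕ∞) Y) (hYharm : ∀ X : Fin m → ℝ, lapPi Y X = 0)
    (A : Fin m → ℝ) :
    ∑ α : Fin m, fderiv ℝ (fderiv ℝ Y) A (Pi.single α 1) (Pi.single α 1) = 0 := by
  have h : ∀ α : Fin m, iteratedDeriv 2 (fun s : ℝ => Y (A + s • (Pi.single α 1 : Fin m → ℝ))) 0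
      = fderiv ℝ (fderiv ℝ Y) A (Pi.single α 1) (Pi.single α 1) := by
    intro α
    have h0 : (fun s : ℝ => Y (A + s • (Pi.single α 1 : Fin m → ℝ)))
        = fun s : ℝ => Y (A + s • (Pi.single α 1 : Fin m → ℝ) + s ^ 2 • (0 : Fin m → ℝ)) := by
      funext s; simp
    rw [h0, line_iteratedDeriv2 hY]
    simp
  have h2 := hYharm A
  unfold lapPi at h2
  rw [← h2]
  exact Finset.sum_congr rfl fun α _ => (h α).symm

end aux2

section aux3

lemma key_eq (d n : ℕ) (Y : (Fin (d + 1) → ℝ) → ℝ)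
    (hYhom : ∀ (c : ℝ), 0 < c → ∀ X : Fin (d + 1) → ℝ, Y (c • X) = c ^ n * Y X)
    (t : ℝ) (x : Fin d → ℝ) (hx : x ≠ 0) :
    uFun d n Y t x
      = ((1 + (t : ℂ) * Complex.I) ^ 2 + ((∑ i, x i ^ 2 : ℝ) : ℂ))
            ^ (((-((n : ℝ) + ((d : ℝ) - 1) / 2) : ℝ)) : ℂ)
          * ((Y (Fin.cons (1 + t ^ 2 - ∑ i, x i ^ 2) (fun j => 2 * x j)) : ℝ) : ℂ) := by
  obtain ⟨i0, hi0⟩ := Function.ne_iff.mp hx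
  have hS : 0 < ∑ i, x i ^ 2 := by
    have hi0' : x i0 ≠ 0 := by simpa using hi0
    have h1 : (0:ℝ) < x i0 ^ 2 := by positivity
    have h2 : x i0 ^ 2 ≤ ∑ i, x i ^ 2 :=
      Finset.single_le_sum (fun i _ => sq_nonneg (x i)) (Finset.mem_univ i0)
    linarith
  simp only [uFun]
  set S : ℝ := ∑ i, x i ^ 2 with hSdef
  set r : ℝ := Real.sqrt S with hrdef
  have hr : 0 < r := Real.sqrt_pos.mpr hS
  have hr2 : r ^ 2 = S := Real.sq_sqrt hS.le
  set lam : ℝ := (n : ℝ) + ((d : ℝ) - 1) / 2 with hlam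
  set a : ℝ := t + r with ha
  set b : ℝ := t - r with hb
  have hQ : 0 < (1 + a ^ 2) * (1 + b ^ 2) := by positivity
  set Q : ℝ := (1 + a ^ 2) * (1 + b ^ 2) with hQdef
  have hsqQ : 0 < Real.sqrt Q := Real.sqrt_pos.mpr hQ
  have hsa : (0:ℝ) < Real.sqrt (1 + a ^ 2) := Real.sqrt_pos.mpr (by positivity)
  have hsb : (0:ℝ) < Real.sqrt (1 + b ^ 2) := Real.sqrt_pos.mpr (by positivity)
  have hsq : Real.sqrt (1 + a ^ 2) * Real.sqrt (1 + b ^ 2) = Real.sqrt Q :=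
    (Real.sqrt_mul (by positivity) _).symm
  set T : ℝ := Real.arctan a + Real.arctan b with hT
  set R : ℝ := Real.arctan a - Real.arctan b with hR
  have hab : a * b = t ^ 2 - S := by rw [← hr2]; ring
  have hcosR : Real.cos R = (1 + a * b) / Real.sqrt Q := by
    rw [hR, Real.cos_sub, Real.cos_arctan, Real.sin_arctan, Real.cos_arctan, Real.sin_arctan,
      ← hsq]
    field_simp
  have hsinR : Real.sin R = (a - b) / Real.sqrt Q := by
    rw [hR, Real.sin_sub, Real.cos_arctan, Real.sin_arctan, Real.cos_arctan, Real.sin_arctan,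
      ← hsq]
    field_simp
  have hcosT : Real.cos T = (1 - a * b) / Real.sqrt Q := by
    rw [hT, Real.cos_add, Real.cos_arctan, Real.sin_arctan, Real.cos_arctan, Real.sin_arctan,
      ← hsq]
    field_simp
  have hsinT : Real.sin T = (a + b) / Real.sqrt Q := by
    rw [hT, Real.sin_add, Real.cos_arctan, Real.sin_arctan, Real.cos_arctan, Real.sin_arctan,
      ← hsq]
    field_simp
  have harg : (Fin.cons (Real.cos R) (fun j => Real.sin R * (x j / r)) : Fin (d + 1) → ℝ)
      = (Real.sqrt Q)⁻¹ • (Fin.cons (1 + t ^ 2 - S) (fun j => 2 * x j) : Fin (d + 1) → ℝ) := by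
    funext k
    induction k using Fin.cases with
    | zero =>
        simp only [Fin.cons_zero, Pi.smul_apply, smul_eq_mul]
        rw [hcosR, hab]
        field_simp
        ring
    | succ j =>
        simp only [Fin.cons_succ, Pi.smul_apply, smul_eq_mul]
        rw [hsinR, hb, ha]
        have : t + r - (t - r) = 2 * r := by ring
        rw [this]
        field_simp
  have hYval : Y (Fin.cons (Real.cos R) (fun j => Real.sin R * (x j / r)))
      = ((Real.sqrt Q)⁻¹) ^ n * Y (Fin.cons (1 + t ^ 2 - S) (fun j => 2 * x j)) := by
    rw [harg]; exact hYhom _ (inv_pos.mpr hsqQ) _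
  have hw : ((1 + (t : ℂ) * Complex.I) ^ 2 + (S : ℂ))
      = Complex.exp (((Real.log (Real.sqrt Q) : ℝ) : ℂ) + (T : ℂ) * Complex.I) := by
    rw [Complex.exp_add, ← Complex.ofReal_exp, Real.exp_log hsqQ, Complex.exp_mul_I,
      ← Complex.ofReal_cos, ← Complex.ofReal_sin]
    have h1 : Real.sqrt Q * Real.cos T = 1 - a * b := by
      rw [hcosT]; field_simp
    have h2 : Real.sqrt Q * Real.sin T = a + b := by
      rw [hsinT]; field_simp
    have : (Real.sqrt Q : ℂ) * (↑(Real.cos T) + ↑(Real.sin T) * Complex.I)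
        = ↑(Real.sqrt Q * Real.cos T) + ↑(Real.sqrt Q * Real.sin T) * Complex.I := by
      push_cast; ring
    rw [this, h1, h2, hab]
    have hab2 : a + b = 2 * t := by rw [ha, hb]; ring
    rw [hab2]
    push_cast
    linear_combination ((t:ℂ) ^ 2) * Complex.I_sq
  have hT1 : -Real.pi < T := by
    have := Real.neg_pi_div_two_lt_arctan a
    have := Real.neg_pi_div_two_lt_arctan b
    rw [hT]; linarith
  have hT2 : T ≤ Real.pi := by
    have := Real.arctan_lt_pi_div_two a
    have := Real.arctan_lt_pi_div_two b
    rw [hT]; linarith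
  have hlog : Complex.log ((1 + (t : ℂ) * Complex.I) ^ 2 + (S : ℂ))
      = ((Real.log (Real.sqrt Q) : ℝ) : ℂ) + (T : ℂ) * Complex.I := by
    rw [hw, Complex.log_exp (by simpa using hT1) (by simpa using hT2)]
  have hw0 : ((1 + (t : ℂ) * Complex.I) ^ 2 + (S : ℂ)) ≠ 0 := by
    rw [hw]; exact Complex.exp_ne_zero _
  have hcpow : ((1 + (t : ℂ) * Complex.I) ^ 2 + (S : ℂ)) ^ (((-lam : ℝ)) : ℂ)
      = ((Real.sqrt Q ^ (-lam) : ℝ) : ℂ) * Complex.exp (-Complex.I * ((T * lam : ℝ) : ℂ)) := by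
    rw [Complex.cpow_def_of_ne_zero hw0, hlog, Real.rpow_def_of_pos hsqQ]
    rw [show ((((Real.log (Real.sqrt Q) : ℝ) : ℂ) + (T : ℂ) * Complex.I) * ((-lam : ℝ) : ℂ))
        = ((Real.log (Real.sqrt Q) * (-lam) : ℝ) : ℂ) + (-Complex.I * ((T * lam : ℝ) : ℂ)) by
      push_cast; ring]
    rw [Complex.exp_add, Complex.ofReal_exp]
  have hpows : Q ^ ((1 - (d : ℝ)) / 4) * ((Real.sqrt Q)⁻¹) ^ n = Real.sqrt Q ^ (-lam) := by
    rw [Real.sqrt_eq_rpow]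
    rw [show ((1 - (d:ℝ))/4) = (1/2) * (-lam) + ((1:ℝ)/2) * (n:ℝ) by rw [hlam]; push_cast; ring,
      Real.rpow_add hQ, Real.rpow_mul hQ.le, Real.rpow_mul hQ.le, Real.rpow_natCast, inv_pow]
    field_simp
  rw [hYval, hcpow]
  rw [← hpows]
  push_cast
  ring

end aux3

noncomputable def vvFun (d n : ℕ) (Y : (Fin (d + 1) → ℝ) → ℝ) (t : ℝ) (x : Fin d → ℝ) : ℂ :=
  ((1 + (t : ℂ) * Complex.I) ^ 2 + ((∑ i, x i ^ 2 : ℝ) : ℂ))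
      ^ (((-((n : ℝ) + ((d : ℝ) - 1) / 2) : ℝ)) : ℂ)
    * ((Y (Fin.cons (1 + t ^ 2 - ∑ i, x i ^ 2) (fun j => 2 * x j)) : ℝ) : ℂ)

section aux4

set_option maxHeartbeats 2000000 in
lemma wave_closed (d n : ℕ) (Y : (Fin (d + 1) → ℝ) → ℝ)
    (hYsmooth : ContDiff ℝ (⊤ : ℕ∞) Y)
    (hYharm : ∀ X : Fin (d + 1) → ℝ, lapPi Y X = 0)
    (hYhom : ∀ (c : ℝ), 0 < c → ∀ X : Fin (d + 1) → ℝ, Y (c • X) = c ^ n * Y X)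
    (t : ℝ) (x : Fin d → ℝ) :
    iteratedDeriv 2 (fun s : ℝ => vvFun d n Y s x) t
      = ∑ i : Fin d, iteratedDeriv 2
          (fun s : ℝ => vvFun d n Y t (x + s • (Pi.single i 1 : Fin d → ℝ))) 0 := by
  have hS0 : (0:ℝ) ≤ ∑ i, x i ^ 2 := Finset.sum_nonneg fun i _ => sq_nonneg _
  set S : ℝ := ∑ i, x i ^ 2 with hSdef
  set lam : ℝ := (n : ℝ) + ((d : ℝ) - 1) / 2 with hlam
  set mu : ℂ := ((-lam : ℝ) : ℂ) with hmu
  set w : ℂ := (1 + (t : ℂ) * Complex.I) ^ 2 + ((S : ℝ) : ℂ) with hwdef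
  set A : Fin (d + 1) → ℝ := Fin.cons (1 + t ^ 2 - S) (fun j => 2 * x j) with hAdef
  set E0 : Fin (d + 1) → ℝ := Pi.single 0 1 with hE0
  set EI : Fin d → Fin (d + 1) → ℝ := fun i => Pi.single i.succ 1 with hEI
  set BB : Fin d → Fin (d + 1) → ℝ :=
    fun i => Fin.cons (-(2 * x i)) (fun j => if j = i then 2 else 0) with hBB
  set CC : Fin (d + 1) → ℝ := Fin.cons (-1) (fun _ => 0) with hCC
  -- scalar shorthands
  set YA : ℝ := Y A with hYA
  set Y0 : ℝ := fderiv ℝ Y A E0 with hY0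
  set YE : Fin d → ℝ := fun i => fderiv ℝ Y A (EI i) with hYE
  set H00 : ℝ := fderiv ℝ (fderiv ℝ Y) A E0 E0 with hH00
  set KK : Fin d → ℝ := fun i => fderiv ℝ (fderiv ℝ Y) A (EI i) E0 with hKK
  set LL : Fin d → ℝ := fun i => fderiv ℝ (fderiv ℝ Y) A (EI i) (EI i) with hLL
  -- ===== time side =====
  have htop : (fun s : ℝ => vvFun d n Y s x)
      = fun s : ℝ => ((1 + (S : ℂ)) + (2 * Complex.I) * (s : ℂ) + (-1) * (s : ℂ) ^ 2) ^ mu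
          * ((Y ((Fin.cons (1 - S) (fun j => 2 * x j) : Fin (d + 1) → ℝ)
              + s • (0 : Fin (d + 1) → ℝ) + s ^ 2 • E0) : ℝ) : ℂ) := by
    funext s
    unfold vvFun
    rw [hmu, hlam, hE0]
    congr 2
    · linear_combination ((s:ℂ) ^ 2 + (s:ℂ)^2 * 0) * Complex.I_sq
    · congr 1
      funext k
      induction k using Fin.cases with
      | zero => simp [Pi.single_apply]; ring
      | succ j => simp [Pi.single_apply, Fin.succ_ne_zero]
  have hqT : ∀ s : ℝ, ((1 + (S : ℂ)) + (2 * Complex.I) * (s : ℂ) + (-1) * (s : ℂ) ^ 2)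
      ∈ Complex.slitPlane := by
    intro s
    rw [Complex.mem_slitPlane_iff]
    rcases eq_or_ne s 0 with h | h
    · left; subst h; simp; linarith
    · right
      have him : ((1 + (S : ℂ)) + (2 * Complex.I) * (s : ℂ) + (-1) * (s : ℂ) ^ 2).im = 2 * s := by
        simp [← Complex.ofReal_pow]
      rw [him]
      exact mul_ne_zero two_ne_zero h
  have hApt : (Fin.cons (1 - S) (fun j => 2 * x j) : Fin (d + 1) → ℝ)
      + t • (0 : Fin (d + 1) → ℝ) + t ^ 2 • E0 = A := by
    funext k
    induction k using Fin.cases with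
    | zero => rw [hE0, hAdef]; simp [Pi.single_apply]; ring
    | succ j => rw [hE0, hAdef]; simp [Pi.single_apply, Fin.succ_ne_zero]
  have hbase : (1 + (S : ℂ)) + (2 * Complex.I) * (t : ℂ) + (-1) * (t : ℂ) ^ 2 = w := by
    rw [hwdef]
    linear_combination (-(t:ℂ) ^ 2) * Complex.I_sq
  have hcdT : (0 : Fin (d + 1) → ℝ) + (2 * t) • E0 = (2 * t) • E0 := zero_add _
  have hg1 : fderiv ℝ Y A ((2 * t) • E0) = 2 * t * Y0 := by
    rw [map_smul, smul_eq_mul, hY0]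
  have hg2 : fderiv ℝ (fderiv ℝ Y) A ((2 * t) • E0) ((2 * t) • E0) = (2*t) * ((2*t) * H00) := by
    simp [map_smul, ContinuousLinearMap.smul_apply, smul_eq_mul, hH00]
  have hg3 : fderiv ℝ Y A ((2 : ℝ) • E0) = 2 * Y0 := by
    rw [map_smul, smul_eq_mul, hY0]
  have hLHS : iteratedDeriv 2 (fun s : ℝ => vvFun d n Y s x) t
      = mu * (mu - 1) * w ^ (mu - 2) * (2 * Complex.I - 2 * (t:ℂ)) ^ 2 * ((YA : ℝ) : ℂ)
        + mu * w ^ (mu - 1) * (-2 * ((YA : ℝ) : ℂ)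
            + (2 * Complex.I - 2 * (t:ℂ)) * (4 * (t:ℂ) * ((Y0 : ℝ) : ℂ)))
        + w ^ mu * (4 * (t:ℂ) ^ 2 * ((H00 : ℝ) : ℂ) + 2 * ((Y0 : ℝ) : ℂ)) := by
    rw [htop, line_cpow_iteratedDeriv2 hYsmooth (1 + (S : ℂ)) (2 * Complex.I) (-1) mu hqT
      (Fin.cons (1 - S) (fun j => 2 * x j)) 0 E0 t]
    rw [hbase, hcdT, hApt, hg1, hg2, hg3, ← hYA]
    push_cast
    ring

  -- ===== space side =====
  have hSsum : ∀ (i : Fin d) (s : ℝ), ∑ j, (x + s • (Pi.single i 1 : Fin d → ℝ)) j ^ 2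
      = S + 2 * x i * s + s ^ 2 := by
    intro i s
    have hterm : ∀ j : Fin d, (x + s • (Pi.single i 1 : Fin d → ℝ)) j ^ 2
        = x j ^ 2 + (if j = i then 2 * x i * s + s ^ 2 else 0) := by
      intro j
      simp only [Pi.add_apply, Pi.smul_apply, Pi.single_apply, smul_eq_mul]
      split_ifs with h
      · subst h; ring
      · ring
    rw [Finset.sum_congr rfl fun j _ => hterm j, Finset.sum_add_distrib,
      Finset.sum_ite_eq' Finset.univ i fun _ => 2 * x i * s + s ^ 2]
    simp [hSdef]
    ring
  have hsp : ∀ i : Fin d, (fun s : ℝ => vvFun d n Y t (x + s • (Pi.single i 1 : Fin d → ℝ)))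
      = fun s : ℝ => (w + ((2 * x i : ℝ) : ℂ) * (s : ℂ) + 1 * (s : ℂ) ^ 2) ^ mu
          * ((Y (A + s • BB i + s ^ 2 • CC) : ℝ) : ℂ) := by
    intro i
    funext s
    unfold vvFun
    rw [hmu, hlam]
    congr 1
    · congr 1
      rw [hSsum i s, hwdef]
      push_cast
      ring
    · congr 1
      congr 1
      funext k
      induction k using Fin.cases with
      | zero =>
          rw [hSsum i s]
          simp [hAdef, hBB, hCC]
          ring
      | succ j =>
          simp [hAdef, hBB, hCC, Pi.single_apply]
          split_ifs <;> ring
  have hq_i : ∀ (i : Fin d) (s : ℝ),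
      (w + ((2 * x i : ℝ) : ℂ) * (s : ℂ) + 1 * (s : ℂ) ^ 2) ∈ Complex.slitPlane := by
    intro i s
    have hrw : (w + ((2 * x i : ℝ) : ℂ) * (s : ℂ) + 1 * (s : ℂ) ^ 2)
        = (1 + (t : ℂ) * Complex.I) ^ 2 + ((S + 2 * x i * s + s ^ 2 : ℝ) : ℂ) := by
      rw [hwdef]; push_cast; ring
    rw [hrw, Complex.mem_slitPlane_iff]
    have hre : ((1 + (t : ℂ) * Complex.I) ^ 2 + ((S + 2 * x i * s + s ^ 2 : ℝ) : ℂ)).re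
        = 1 - t ^ 2 + (S + 2 * x i * s + s ^ 2) := by
      rw [sq]
      simp [Complex.mul_re, Complex.mul_im, Complex.add_re, ← Complex.ofReal_pow]
      ring
    have him : ((1 + (t : ℂ) * Complex.I) ^ 2 + ((S + 2 * x i * s + s ^ 2 : ℝ) : ℂ)).im
        = 2 * t := by
      rw [sq]
      simp [Complex.mul_re, Complex.mul_im, Complex.add_im, ← Complex.ofReal_pow]
      ring
    rcases eq_or_ne t 0 with h | h
    · left
      rw [hre, h]
      have h2 : (0:ℝ) ≤ S + 2 * x i * s + s ^ 2 := by
        rw [← hSsum i s]; exact Finset.sum_nonneg fun j _ => sq_nonneg _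
      nlinarith
    · right; rw [him]; exact mul_ne_zero two_ne_zero h
  have hBBdec : ∀ i : Fin d, BB i = (-(2 * x i)) • E0 + (2 : ℝ) • EI i := by
    intro i
    funext k
    induction k using Fin.cases with
    | zero => simp [hBB, hE0, hEI, Pi.single_apply, (Fin.succ_ne_zero i).symm]
    | succ j =>
        simp [hBB, hE0, hEI, Pi.single_apply, Fin.succ_ne_zero, Fin.succ_inj]
  have hg1B : ∀ i : Fin d, fderiv ℝ Y A (BB i) = -(2 * x i) * Y0 + 2 * YE i := by
    intro i
    rw [hBBdec i, map_add, map_smul, map_smul]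
    simp [smul_eq_mul, hY0, hYE]
  have hg2B : ∀ i : Fin d, fderiv ℝ (fderiv ℝ Y) A (BB i) (BB i)
      = 4 * (x i) ^ 2 * H00 - 8 * (x i) * (KK i) + 4 * (LL i) := by
    intro i
    simp only [hBBdec i, map_add, map_smul, ContinuousLinearMap.add_apply,
      ContinuousLinearMap.smul_apply, smul_eq_mul]
    rw [sym2 hYsmooth A E0 (EI i)]
    simp only [hH00, hKK, hLL]
    ring
  have hCC2 : fderiv ℝ Y A ((2 : ℝ) • CC) = -2 * Y0 := by
    have h2 : (2 : ℝ) • CC = (-2 : ℝ) • E0 := by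
      funext k
      induction k using Fin.cases with
      | zero => simp [hCC, hE0, Pi.single_apply]
      | succ j => simp [hCC, hE0, Pi.single_apply, Fin.succ_ne_zero]
    rw [h2, map_smul, smul_eq_mul, hY0]
  have hRHSi : ∀ i : Fin d,
      iteratedDeriv 2 (fun s : ℝ => vvFun d n Y t (x + s • (Pi.single i 1 : Fin d → ℝ))) 0
      = (4 * mu * (mu - 1) * w ^ (mu - 2) * ((YA : ℝ) : ℂ) - 8 * mu * w ^ (mu - 1) * ((Y0 : ℝ) : ℂ)
            + 4 * w ^ mu * ((H00 : ℝ) : ℂ)) * ((x i ^ 2 : ℝ) : ℂ)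
        + (8 * mu * w ^ (mu - 1)) * ((x i * YE i : ℝ) : ℂ)
        + (-8 * w ^ mu) * ((x i * KK i : ℝ) : ℂ)
        + (4 * w ^ mu) * ((LL i : ℝ) : ℂ)
        + (2 * mu * w ^ (mu - 1) * ((YA : ℝ) : ℂ) - 2 * w ^ mu * ((Y0 : ℝ) : ℂ)) := by
    intro i
    rw [hsp i, line_cpow_iteratedDeriv2 hYsmooth w ((2 * x i : ℝ) : ℂ) 1 mu (hq_i i) A (BB i) CC 0]
    simp only [Complex.ofReal_zero, mul_zero, zero_mul, add_zero, zero_pow, ne_eq,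
      OfNat.ofNat_ne_zero, not_false_iff, zero_smul, smul_zero, zero_add,
      pow_eq_zero_iff]
    rw [hg1B i, hg2B i, hCC2, ← hYA]
    push_cast
    ring
  -- ===== sum identities =====
  have hdec : A = (1 + t ^ 2 - S) • E0 + ∑ i : Fin d, (2 * x i) • EI i := by
    rw [hAdef, hE0, hEI]
    exact cons_decomp _ _
  have hEuler1 : ∑ i : Fin d, x i * YE i = ((n : ℝ) * YA - (1 + t ^ 2 - S) * Y0) / 2 := by
    have h1 := euler1 hYsmooth hYhom A
    have h2 : fderiv ℝ Y A A = (1 + t ^ 2 - S) * Y0 + 2 * ∑ i : Fin d, x i * YE i := by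
      nth_rewrite 2 [hdec]
      rw [map_add, map_smul, map_sum, smul_eq_mul, hY0]
      have h3 : ∑ i : Fin d, fderiv ℝ Y A ((2 * x i) • EI i) = 2 * ∑ i : Fin d, x i * YE i := by
        rw [Finset.mul_sum]
        refine Finset.sum_congr rfl fun i _ => ?_
        rw [map_smul, smul_eq_mul, hYE]
        ring
      rw [h3]
    rw [← hYA] at h1
    rw [h1] at h2
    linarith
  have hEuler2 : ∑ i : Fin d, x i * KK i = (((n : ℝ) - 1) * Y0 - (1 + t ^ 2 - S) * H00) / 2 := by
    have h1 := euler2 hYsmooth hYhom A E0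
    have h2 : fderiv ℝ (fderiv ℝ Y) A A E0
        = (1 + t ^ 2 - S) * H00 + 2 * ∑ i : Fin d, x i * KK i := by
      nth_rewrite 2 [hdec]
      rw [map_add, map_smul, map_sum, ContinuousLinearMap.add_apply,
        ContinuousLinearMap.smul_apply, ContinuousLinearMap.sum_apply, smul_eq_mul, hH00]
      have h3 : ∑ i : Fin d, (fderiv ℝ (fderiv ℝ Y) A ((2 * x i) • EI i)) E0
          = 2 * ∑ i : Fin d, x i * KK i := by
        rw [Finset.mul_sum]
        refine Finset.sum_congr rfl fun i _ => ?_
        rw [map_smul, ContinuousLinearMap.smul_apply, smul_eq_mul, hKK]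
        ring
      rw [h3]
    rw [← hY0] at h1
    rw [h1] at h2
    linarith
  have hHarm : ∑ i : Fin d, LL i = -H00 := by
    have h := harm_sum hYsmooth hYharm A
    rw [Fin.sum_univ_succ] at h
    simp only [hLL, hEI, hH00, hE0]
    linarith [h]
  -- ===== final assembly =====
  have hw0 : w ≠ 0 := by
    have hmem := hqT t
    rw [hbase] at hmem
    intro hcon
    rw [hcon, Complex.mem_slitPlane_iff] at hmem
    simp at hmem
  have hw2 : w ^ (mu - 1) = w ^ (mu - 2) * w := by
    rw [show mu - 1 = mu - 2 + 1 by ring, Complex.cpow_add _ _ hw0, Complex.cpow_one]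
  have hw3 : w ^ mu = w ^ (mu - 2) * w ^ 2 := by
    have h22 : w ^ (2 : ℂ) = w ^ (2 : ℕ) := by
      rw [show (2 : ℂ) = ((2 : ℕ) : ℂ) by norm_num, Complex.cpow_natCast]
    have h23 := Complex.cpow_add (mu - 2) 2 hw0
    rw [h22] at h23
    rw [← h23]
    congr 1
    ring
  rw [hLHS, Finset.sum_congr rfl fun i _ => hRHSi i]
  rw [Finset.sum_add_distrib, Finset.sum_add_distrib, Finset.sum_add_distrib,
    Finset.sum_add_distrib, ← Finset.mul_sum, ← Finset.mul_sum, ← Finset.mul_sum,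
    ← Finset.mul_sum, ← Complex.ofReal_sum, ← Complex.ofReal_sum, ← Complex.ofReal_sum,
    ← Complex.ofReal_sum, ← hSdef, hEuler1, hEuler2, hHarm, Finset.sum_const,
    Finset.card_univ, Fintype.card_fin, nsmul_eq_mul]
  rw [hw2, hw3, hmu, hlam, hwdef]
  rw [Complex.ext_iff]
  constructor
  · simp only [pow_two, Complex.add_re, Complex.add_im, Complex.sub_re, Complex.sub_im,
      Complex.mul_re, Complex.mul_im, Complex.neg_re, Complex.neg_im, Complex.I_re,
      Complex.I_im, Complex.ofReal_re, Complex.ofReal_im, Complex.one_re, Complex.one_im,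
      Complex.re_ofNat, Complex.im_ofNat, Complex.natCast_re, Complex.natCast_im]
    ring
  · simp only [pow_two, Complex.add_re, Complex.add_im, Complex.sub_re, Complex.sub_im,
      Complex.mul_re, Complex.mul_im, Complex.neg_re, Complex.neg_im, Complex.I_re,
      Complex.I_im, Complex.ofReal_re, Complex.ofReal_im, Complex.one_re, Complex.one_im,
      Complex.re_ofNat, Complex.im_ofNat, Complex.natCast_re, Complex.natCast_im]
    ring

end aux4

/-- For `d ≥ 2` and `Y_n` a spherical harmonic of degree `n` on `S^d` (the restriction of a
smooth harmonic function on `ℝ^{d+1}`, homogeneous of degree `n`), the function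
`u(t,x) = [(1+(t+r)²)(1+(t−r)²)]^{(1−d)/4} e^{−iT(n+(d−1)/2)} Y_n(cos R, ω sin R)` satisfies
the wave equation `∂_t² u = Δ u` on `ℝ^{1+d}` (away from the spatial origin). -/
theorem uFun_wave_equation (d n : ℕ) (hd : 2 ≤ d)
    (Y : (Fin (d + 1) → ℝ) → ℝ)
    (hYsmooth : ContDiff ℝ (⊤ : ℕ∞) Y)
    (hYharm : ∀ X : Fin (d + 1) → ℝ, lapPi Y X = 0)
    (hYhom : ∀ (c : ℝ), 0 < c → ∀ X : Fin (d + 1) → ℝ, Y (c • X) = c ^ n * Y X) :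
    ∀ (t : ℝ) (x : Fin d → ℝ), x ≠ 0 →
      iteratedDeriv 2 (fun s : ℝ => uFun d n Y s x) t = lapPi (uFun d n Y t) x := by
  intro t x hx
  have hkey : ∀ (t' : ℝ) (x' : Fin d → ℝ), x' ≠ 0 → uFun d n Y t' x' = vvFun d n Y t' x' := by
    intro t' x' hx'
    rw [key_eq d n Y hYhom t' x' hx']
    rfl
  rw [show (fun s : ℝ => uFun d n Y s x) = (fun s : ℝ => vvFun d n Y s x) from
    funext fun s => hkey s x hx]
  rw [wave_closed d n Y hYsmooth hYharm hYhom t x]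
  unfold lapPi
  refine Finset.sum_congr rfl fun i _ => ?_
  have hc : ContinuousAt (fun s : ℝ => x + s • (Pi.single i 1 : Fin d → ℝ)) 0 :=
    (continuous_const.add (continuous_id.smul continuous_const)).continuousAt
  have hne : ∀ᶠ s : ℝ in nhds 0, x + s • (Pi.single i 1 : Fin d → ℝ) ≠ 0 :=
    hc.eventually_ne (by simpa using hx)
  have hev : (fun s : ℝ => vvFun d n Y t (x + s • (Pi.single i 1 : Fin d → ℝ)))
      =ᶠ[nhds 0] fun s => uFun d n Y t (x + s • (Pi.single i 1 : Fin d → ℝ)) :=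
    hne.mono fun s hs => (hkey t _ hs).symm
  rw [iteratedDeriv_two, iteratedDeriv_two]
  exact (hev.deriv).deriv_eq
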